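/- For every positive integer k and every integer m ≥ k, Duplicator wins the k-round Ehrenfeucht game on the trees T_1^{(1,k,m)} and T_2^{(1,k,m)} in which Spoiler makes all k of his moves on T_2^{(1,k,m)} and Duplicator responds on T_1^{(1,k,m)}; that is, Duplicator can ensure the winning conditions (Main 1) and (Main 2) hold for all selected pairs together with the pair of roots. -/

import Mathlib

/-! ## Rooted trees -/

/-- A rooted tree structure: a vertex type, a root, and a parent map
(`parent v = none` is intended to hold exactly when `v` is the root). -/
structure RTree where
  V : Type
  root : V
  parent : V → Option V

namespace RTree

/-- Iterate the parent map `n` times. -/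
def parentIter (T : RTree) : ℕ → T.V → Option T.V
  | 0, v => some v
  | n + 1, v => (T.parent v).bind (T.parentIter n)

/-- `u` is a descendant of `v` (possibly `u = v`). -/
def IsDesc (T : RTree) (v u : T.V) : Prop :=
  ∃ n, T.parentIter n u = some v

/-- The structure is a genuine rooted, locally finite tree:
exactly the root has no parent, every vertex reaches the root by iterating
the parent map (connectivity and acyclicity), and every vertex has finitely
many children (local finiteness). -/
def IsTree (T : RTree) : Prop :=
  (∀ v, T.parent v = none ↔ v = T.root) ∧
  (∀ v, ∃ n, T.parentIter n v = some T.root) ∧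
  (∀ v, {u | T.parent u = some v}.Finite)

open Classical in
/-- The subtree `T(v)` consisting of `v` and all its descendants, rooted at `v`. -/
noncomputable def subtree (T : RTree) (v : T.V) : RTree where
  V := {u : T.V // T.IsDesc v u}
  root := ⟨v, 0, rfl⟩
  parent u :=
    if u.1 = v then none
    else (T.parent u.1).bind fun w =>
      if h : T.IsDesc v w then some ⟨w, h⟩ else none

end RTree

/-- An isomorphism of rooted trees: a bijection of vertices mapping root to
root and commuting with the parent maps. -/
structure TreeIso (S T : RTree) where
  toEquiv : S.V ≃ T.V
  map_root : toEquiv S.root = T.root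
  map_parent : ∀ v, (S.parent v).map toEquiv = T.parent (toEquiv v)

/-! ## First-order logic of rooted trees -/

/-- Terms: variables (de Bruijn indices) and the constant `R` for the root. -/
inductive FOTerm where
  | var : ℕ → FOTerm
  | root : FOTerm
deriving DecidableEq

/-- First-order formulas in the language of rooted trees: equality `x = y`,
the parent relation `parentOf t t'` (meaning `π(t') = t`, i.e. `t` is the
parent of `t'`), Boolean connectives, and quantifiers (de Bruijn style). -/
inductive FOFormula where
  | eq : FOTerm → FOTerm → FOFormula
  | parentOf : FOTerm → FOTerm → FOFormula
  | not : FOFormula → FOFormula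
  | and : FOFormula → FOFormula → FOFormula
  | or : FOFormula → FOFormula → FOFormula
  | imp : FOFormula → FOFormula → FOFormula
  | all : FOFormula → FOFormula
  | ex : FOFormula → FOFormula
deriving DecidableEq

namespace FOTerm

def eval (T : RTree) (env : ℕ → T.V) : FOTerm → T.V
  | var n => env n
  | root => T.root

def freeBound : FOTerm → ℕ
  | var n => n + 1
  | root => 0

end FOTerm

/-- Kinds of quantifiers, used to count alternations. -/
inductive QKind where
  | ex | all
deriving DecidableEq

/-- The dual of a quantifier kind. -/
def QKind.dual : QKind → QKind
  | .ex => .all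
  | .all => .ex

namespace FOFormula

/-- Satisfaction of a formula in a rooted tree under an environment. -/
def Sat (T : RTree) : FOFormula → (ℕ → T.V) → Prop
  | eq t₁ t₂, env => t₁.eval T env = t₂.eval T env
  | parentOf t₁ t₂, env => T.parent (t₂.eval T env) = some (t₁.eval T env)
  | not φ, env => ¬ φ.Sat T env
  | and φ ψ, env => φ.Sat T env ∧ ψ.Sat T env
  | or φ ψ, env => φ.Sat T env ∨ ψ.Sat T env
  | imp φ ψ, env => φ.Sat T env → ψ.Sat T env
  | all φ, env => ∀ w : T.V, φ.Sat T (fun n => match n with | 0 => w | Nat.succ k => env k)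
  | ex φ, env => ∃ w : T.V, φ.Sat T (fun n => match n with | 0 => w | Nat.succ k => env k)

/-- Quantifier depth: the maximum number of nested quantifiers. -/
def qd : FOFormula → ℕ
  | eq _ _ => 0
  | parentOf _ _ => 0
  | not φ => φ.qd
  | and φ ψ => max φ.qd ψ.qd
  | or φ ψ => max φ.qd ψ.qd
  | imp φ ψ => max φ.qd ψ.qd
  | all φ => φ.qd + 1
  | ex φ => φ.qd + 1

/-- Auxiliary alternation count: `aqdAux φ pol q` is the maximum number of
alternations between (effectively) existential and universal quantifiers along
a nested quantifier sequence of `φ`, given the current polarity `pol`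
(`true` = positive; negations and antecedents of implications flip it, so that
e.g. a `∀` under a negation counts as an `∃`) and the effective kind `q` of
the innermost enclosing quantifier (if any). -/
def aqdAux : FOFormula → Bool → Option QKind → ℕ
  | eq _ _, _, _ => 0
  | parentOf _ _, _, _ => 0
  | not φ, pol, q => φ.aqdAux (!pol) q
  | and φ ψ, pol, q => max (φ.aqdAux pol q) (ψ.aqdAux pol q)
  | or φ ψ, pol, q => max (φ.aqdAux pol q) (ψ.aqdAux pol q)
  | imp φ ψ, pol, q => max (φ.aqdAux (!pol) q) (ψ.aqdAux pol q)
  | all φ, pol, q =>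
      (if q = some (if pol then QKind.ex else QKind.all) then 1 else 0) +
        φ.aqdAux pol (some (if pol then QKind.all else QKind.ex))
  | ex φ, pol, q =>
      (if q = some (if pol then QKind.all else QKind.ex) then 1 else 0) +
        φ.aqdAux pol (some (if pol then QKind.ex else QKind.all))

/-- The number of alternations of quantifiers of a formula: the maximum number
of switches between (effectively) existential and universal quantifiers in a
nested quantifier sequence.  Purely existential or purely universal formulas
have `aqd = 0`. -/
def aqd (φ : FOFormula) : ℕ := φ.aqdAux true none

/-- A bound on the free variables of a formula: all free de Bruijn indices
are `< freeBound`. -/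
def freeBound : FOFormula → ℕ
  | eq t₁ t₂ => max t₁.freeBound t₂.freeBound
  | parentOf t₁ t₂ => max t₁.freeBound t₂.freeBound
  | not φ => φ.freeBound
  | and φ ψ => max φ.freeBound ψ.freeBound
  | or φ ψ => max φ.freeBound ψ.freeBound
  | imp φ ψ => max φ.freeBound ψ.freeBound
  | all φ => φ.freeBound - 1
  | ex φ => φ.freeBound - 1

/-- A sentence is a formula with no free variables. -/
def IsSentence (φ : FOFormula) : Prop := φ.freeBound = 0

end FOFormula

/-- A (closed) formula holds in a rooted tree. -/
def Models (T : RTree) (φ : FOFormula) : Prop :=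
  φ.Sat T (fun _ => T.root)

/-- The formula `P_i(x)`, with free variable `x` being de Bruijn index `0`:
`P_0(x) = ∀ y ¬(π(y) = x)` and `P_{i+1}(x) = ∀ y (π(y) = x → ¬ P_i(y))`. -/
def Pform : ℕ → FOFormula
  | 0 => .all (.not (.parentOf (.var 1) (.var 0)))
  | i + 1 => .all (.imp (.parentOf (.var 1) (.var 0)) (.not (Pform i)))

/-- The sentence `KEIN_i = P_i(R)`. -/
def KEIN : ℕ → FOFormula
  | 0 => .all (.not (.parentOf .root (.var 0)))
  | i + 1 => .all (.imp (.parentOf .root (.var 0)) (.not (Pform i)))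

/-! ## Ehrenfeucht games -/

/-- The winning condition for Duplicator: for all pairs `(x_i, y_i)`, `(x_j, y_j)`
in the list of selected/designated pairs, (Main 1) `π(x_j) = x_i ↔ π(y_j) = y_i`,
and (Main 2) `x_i = x_j ↔ y_i = y_j`. -/
def GoodPairs (T₁ T₂ : RTree) (ps : List (T₁.V × T₂.V)) : Prop :=
  ∀ p ∈ ps, ∀ q ∈ ps,
    (T₁.parent p.1 = some q.1 ↔ T₂.parent p.2 = some q.2) ∧
    (p.1 = q.1 ↔ p.2 = q.2)

/-- Duplicator wins the scheduled Ehrenfeucht game on `T₁, T₂` in which Spoiler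
must play his moves in consecutive batches, the batch sizes given by the list
`sched`, switching trees after each batch; `side = true` means Spoiler currently
plays on `T₁` (Duplicator answering on `T₂`), `side = false` means Spoiler
currently plays on `T₂`.  The list `ps` records the pairs selected so far
(including designated pairs and the pair of roots); Duplicator wins when the
final configuration satisfies `GoodPairs`. -/
def DupWinsSched (T₁ T₂ : RTree) : List ℕ → Bool → List (T₁.V × T₂.V) → Prop
  | [], _, ps => GoodPairs T₁ T₂ ps
  | 0 :: rest, side, ps => DupWinsSched T₁ T₂ rest (!side) ps
  | (n + 1) :: rest, side, ps =>
      if side then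
        ∀ x : T₁.V, ∃ y : T₂.V, DupWinsSched T₁ T₂ (n :: rest) side ((x, y) :: ps)
      else
        ∀ y : T₂.V, ∃ x : T₁.V, DupWinsSched T₁ T₂ (n :: rest) side ((x, y) :: ps)
termination_by sched _ _ => (sched.length, sched.sum)
decreasing_by
  all_goals
    first
      | exact Prod.Lex.left _ _ (Nat.lt_succ_self _)
      | exact Prod.Lex.right _ (by simp [List.sum_cons])

/-- The cost (in switches) for Spoiler of playing on side `side` when his
previous move (if any) was on side `last`. -/
def switchCost (last : Option Bool) (side : Bool) : ℕ :=
  match last with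
  | none => 0
  | some b => if b = side then 0 else 1

/-- Duplicator wins the Ehrenfeucht game `EHR` with `rounds` remaining rounds,
`sw` remaining switches allowed to Spoiler, `last` the side on which Spoiler
made his previous move (if any), and `ps` the pairs selected so far.  In each
round Spoiler picks a side (paying a switch if he changes trees, which he may
do only if he has switches left) and a vertex in that tree, and Duplicator
answers in the other tree. -/
def DupWinsEHRAux (T₁ T₂ : RTree) :
    ℕ → ℕ → Option Bool → List (T₁.V × T₂.V) → Prop
  | 0, _, _, ps => GoodPairs T₁ T₂ ps
  | r + 1, sw, last, ps =>
      ∀ side : Bool, switchCost last side ≤ sw →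
        if side then
          ∀ x : T₁.V, ∃ y : T₂.V,
            DupWinsEHRAux T₁ T₂ r (sw - switchCost last side) (some side) ((x, y) :: ps)
        else
          ∀ y : T₂.V, ∃ x : T₁.V,
            DupWinsEHRAux T₁ T₂ r (sw - switchCost last side) (some side) ((x, y) :: ps)

/-- Duplicator wins the game `EHR[T₁, T₂, s, r]`: `r` rounds, Spoiler may start
on either tree and make at most `s` switches. -/
def DupWinsEHR (T₁ T₂ : RTree) (s r : ℕ) : Prop :=
  DupWinsEHRAux T₁ T₂ r s none [(T₁.root, T₂.root)]

/-! ## The trees `T₁^{(s,k,m)}` and `T₂^{(s,k,m)}` -/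

/-- The one-vertex rooted tree. -/
def single : RTree where
  V := PUnit
  root := PUnit.unit
  parent := fun _ => none

/-- Hang the trees `f 0, …, f (n-1)` from a new root: the root of each `f i`
becomes a child of the new root. -/
def hang (n : ℕ) (f : Fin n → RTree) : RTree where
  V := Unit ⊕ (Σ i : Fin n, (f i).V)
  root := Sum.inl ()
  parent := fun x =>
    match x with
    | Sum.inl _ => none
    | Sum.inr ⟨i, w⟩ =>
      match (f i).parent w with
      | none => some (Sum.inl ())
      | some w' => some (Sum.inr ⟨i, w'⟩)

/-- The pair of trees `(T₁^{(s,k,m)}, T₂^{(s,k,m)})`, indexed by `s` (the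
parameter `k` plays no role in the construction).  Conventions for `s = 0`:
`T₁^{(0)}` is a single vertex and `T₂^{(0)}` is a star of `m` childless
children.  For `s ≥ 1`: in `T₁^{(s+1)}` the root has `m+1` children, from each
of which hangs a copy of `T₂^{(s)}`; in `T₂^{(s+1)}` the root has `m+1`
children, from `m` of which hangs a copy of `T₂^{(s)}` and from the remaining
one hangs a copy of `T₁^{(s)}`. -/
def TreePair (m : ℕ) : ℕ → RTree × RTree
  | 0 => (single, hang m fun _ => single)
  | s + 1 =>
      (hang (m + 1) fun _ => (TreePair m s).2,
       hang (m + 1) fun i => if i.1 = m then (TreePair m s).1 else (TreePair m s).2)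

/-- The tree `T₁^{(s,k,m)}`. -/
def Tree1 (s k m : ℕ) : RTree := (TreePair m s).1

/-- The tree `T₂^{(s,k,m)}`. -/
def Tree2 (s k m : ℕ) : RTree := (TreePair m s).2

/-!
Spoiler moves only in `T₂^{(1,k,m)}`, and this tree embeds into `T₁^{(1,k,m)}` as a rooted tree:
the childless child of the root goes to the root of one of the stars.  Duplicator answers every
move `y` with its image under the embedding; an injective map commuting with the parent maps
preserves and reflects both equality and the parent relation, so (Main 1) and (Main 2) hold.
-/

namespace RTree

structure Emb (S T : RTree) where
  toFun : S.V → T.V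
  injective : Function.Injective toFun
  map_root : toFun S.root = T.root
  map_parent : ∀ v, T.parent (toFun v) = (S.parent v).map toFun

namespace Emb

def refl (T : RTree) : Emb T T where
  toFun := id
  injective := Function.injective_id
  map_root := rfl
  map_parent _ := (congrFun Option.map_id _).symm

def ofSingle (T : RTree) (hT : T.parent T.root = none) : Emb single T where
  toFun _ := T.root
  injective _ _ _ := rfl
  map_root := rfl
  map_parent _ := hT

def hang {n : ℕ} {A B : Fin n → RTree} (e : ∀ i, Emb (A i) (B i)) :
    Emb (_root_.hang n A) (_root_.hang n B) where
  toFun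
    | .inl _ => .inl ()
    | .inr ⟨i, w⟩ => .inr ⟨i, (e i).toFun w⟩
  injective := by
    rintro (_ | ⟨i, v⟩) (_ | ⟨j, w⟩) h
    · rfl
    · cases h
    · cases h
    · obtain ⟨rfl, h⟩ := Sigma.mk.inj_iff.mp (Sum.inr.inj h)
      rw [(e i).injective (eq_of_heq h)]
  map_root := rfl
  map_parent := by
    rintro (_ | ⟨i, w⟩)
    · rfl
    · simp only [_root_.hang, (e i).map_parent]
      cases (A i).parent w <;> rfl

def ite {p : Prop} [Decidable p] {A B T : RTree} (eA : Emb A T) (eB : Emb B T) :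
    Emb (if p then A else B) T := by
  split_ifs
  exacts [eA, eB]

theorem parent_eq_some_iff {S T : RTree} (e : Emb S T) (u v : S.V) :
    T.parent (e.toFun u) = some (e.toFun v) ↔ S.parent u = some v := by
  rw [e.map_parent]
  cases S.parent u <;> simp [e.injective.eq_iff]

end Emb

end RTree

open RTree

def treePairFstEmbSnd (m : ℕ) : Emb (TreePair m 0).1 (TreePair m 0).2 :=
  Emb.ofSingle _ rfl

def treePairSuccSndEmbFst {m s : ℕ} (e : Emb (TreePair m s).1 (TreePair m s).2) :
    Emb (TreePair m (s + 1)).2 (TreePair m (s + 1)).1 :=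
  Emb.hang fun _ => Emb.ite e (Emb.refl _)

theorem goodPairs_of_emb {T₁ T₂ : RTree} (e : Emb T₂ T₁) (ps : List (T₁.V × T₂.V))
    (hps : ∀ p ∈ ps, p.1 = e.toFun p.2) : GoodPairs T₁ T₂ ps := by
  intro p hp q hq
  rw [hps p hp, hps q hq]
  exact ⟨e.parent_eq_some_iff _ _, e.injective.eq_iff⟩

theorem dupWinsSched_of_emb {T₁ T₂ : RTree} (e : Emb T₂ T₁) (n : ℕ) (ps : List (T₁.V × T₂.V))
    (hps : ∀ p ∈ ps, p.1 = e.toFun p.2) : DupWinsSched T₁ T₂ [n] false ps := by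
  induction n generalizing ps with
  | zero =>
    rw [DupWinsSched, DupWinsSched]
    exact goodPairs_of_emb e ps hps
  | succ n ih =>
    rw [DupWinsSched, if_neg Bool.false_ne_true]
    intro y
    refine ⟨e.toFun y, ih _ ?_⟩
    rintro p (_ | ⟨_, hp⟩)
    exacts [rfl, hps p hp]

theorem dup_wins_base_spoiler_on_T2_general (k m : ℕ) :
    DupWinsSched (Tree1 1 k m) (Tree2 1 k m) [k] false
      [((Tree1 1 k m).root, (Tree2 1 k m).root)] := by
  let e : Emb (Tree2 1 k m) (Tree1 1 k m) := treePairSuccSndEmbFst (treePairFstEmbSnd m)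
  refine dupWinsSched_of_emb e k _ ?_
  rintro p (_ | ⟨_, ⟨⟩⟩)
  exact e.map_root.symm

/-- For every positive `k` and `m ≥ k`, Duplicator wins the
`k`-round Ehrenfeucht game on `T₁^{(1,k,m)}` and `T₂^{(1,k,m)}` in which
Spoiler makes all his moves on `T₂^{(1,k,m)}`. -/
theorem dup_wins_base_spoiler_on_T2 (k m : ℕ) (hk : 0 < k) (hm : k ≤ m) :
    DupWinsSched (Tree1 1 k m) (Tree2 1 k m) [k] false
      [((Tree1 1 k m).root, (Tree2 1 k m).root)] :=
  dup_wins_base_spoiler_on_T2_general k m
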